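/- Let K ⊆ ℝⁿ be a compact convex set with 0 in its interior whose gauge γ is strictly convex, let U ⊆ ℝⁿ be a bounded open set with nonempty boundary, and let φ : ℝⁿ → ℝ be continuous and satisfy the strict Lipschitz property. If for some x ∈ U there exist two distinct points y, z ∈ ∂U with ρ(x) = γ(x − y) + φ(y) = γ(x − z) + φ(z), then ρ is not differentiable at x. -/

import Mathlib

open Set Filter Topology MeasureTheory
open scoped NNReal

noncomputable section

abbrev Euc (n : ℕ) := EuclideanSpace ℝ (Fin n)

/-- The real inner product. -/
noncomputable def rinner {n : ℕ} (x y : Euc n) : ℝ := inner ℝ x y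

/-- The polar set `K° = {x | ⟨x, y⟩ ≤ 1 for all y ∈ K}`. -/
def polarSet {n : ℕ} (K : Set (Euc n)) : Set (Euc n) :=
  {x | ∀ y ∈ K, rinner x y ≤ 1}

/-- `rho K U φ x = min_{y ∈ ∂U} (γ_K(x - y) + φ y)`. -/
noncomputable def rho {n : ℕ} (K U : Set (Euc n)) (φ : Euc n → ℝ) (x : Euc n) : ℝ :=
  sInf ((fun y => gauge K (x - y) + φ y) '' frontier U)

/-- `rhoBar K U φ x = min_{y ∈ ∂U} (γ_K(y - x) - φ y)`. -/
noncomputable def rhoBar {n : ℕ} (K U : Set (Euc n)) (φ : Euc n → ℝ) (x : Euc n) : ℝ :=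
  sInf ((fun y => gauge K (y - x) - φ y) '' frontier U)

/-- `φ` satisfies the strict Lipschitz property with respect to the gauge of `K`. -/
def StrictLipschitzWrt {n : ℕ} (K : Set (Euc n)) (φ : Euc n → ℝ) : Prop :=
  ∀ x y : Euc n, x ≠ y → -gauge K (y - x) < φ x - φ y ∧ φ x - φ y < gauge K (x - y)

/-- The gauge of `K` is strictly convex: `γ(x+y) < γ(x) + γ(y)` unless
`x = c • y` or `y = c • x` for some `c ≥ 0`. -/
def StrictlyConvexGauge {n : ℕ} (K : Set (Euc n)) : Prop :=
  ∀ x y : Euc n, (¬ ∃ c : ℝ, 0 ≤ c ∧ (x = c • y ∨ y = c • x)) →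
    gauge K (x + y) < gauge K x + gauge K y

/-
Differentiate `ρ` at `x` in direction `v`. Since `ρ(x + v) ≤ ρ(x) + γ(v)`, the derivative `L`
satisfies `L v ≤ γ(v)` for every `v`; since `ρ` decreases at exact rate `γ(x - y)` when `x`
moves towards a closest point `y` on the segment `[x, y]`, `L (x - y) ≥ γ(x - y)`, and likewise
for `z`. Adding, `γ(x - y) + γ(x - z) ≤ L (2x - y - z) ≤ γ(2x - y - z)`, so strict convexity forces
`x - y` and `x - z` onto a common ray. But two closest points on a common ray through `x` are
ruled out by the strict Lipschitz property of `φ`.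
-/

lemma HasFDerivAt.apply_le_of_eventually_le_add {E : Type*} [NormedAddCommGroup E]
    [NormedSpace ℝ E] {f : E → ℝ} {L : E →L[ℝ] ℝ} {x v : E} {c : ℝ} (hf : HasFDerivAt f L x)
    (h : ∀ᶠ t in 𝓝[>] (0 : ℝ), f (x + t • v) ≤ f x + t * c) : L v ≤ c := by
  have hline : HasDerivAt (fun t : ℝ => f (x + t • v)) (L v) 0 := by
    have hg : HasDerivAt (fun t : ℝ => x + t • v) v 0 := by
      simpa using ((hasDerivAt_id (0 : ℝ)).smul_const v).const_add x
    exact (by simpa using hf : HasFDerivAt f L (x + (0 : ℝ) • v)).comp_hasDerivAt 0 hg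
  refine le_of_tendsto hline.tendsto_slope_zero_right ?_
  filter_upwards [h, self_mem_nhdsWithin] with t ht (ht0 : 0 < t)
  rw [zero_add, zero_smul, add_zero, smul_eq_mul, inv_mul_le_iff₀ ht0]
  linarith

lemma gauge_sub_le_gauge_sub_add_gauge_sub {E : Type*} [AddCommGroup E] [Module ℝ E]
    {K : Set E} (hKconv : Convex ℝ K) (hKabs : Absorbent ℝ K) (a b c : E) :
    gauge K (a - c) ≤ gauge K (a - b) + gauge K (b - c) := by
  simpa using gauge_add_le hKconv hKabs (a - b) (b - c)

section Rho

variable {n : ℕ} {K U : Set (Euc n)} {φ : Euc n → ℝ}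

lemma StrictLipschitzWrt.sub_le_gauge (hφ : StrictLipschitzWrt K φ) (x w : Euc n) :
    φ x - φ w ≤ gauge K (x - w) := by
  rcases eq_or_ne x w with rfl | hxw
  · simp
  · exact (hφ x w hxw).2.le

lemma StrictLipschitzWrt.bddBelow_rho_image (hφ : StrictLipschitzWrt K φ) (x : Euc n) :
    BddBelow ((fun w => gauge K (x - w) + φ w) '' frontier U) := by
  refine ⟨φ x, ?_⟩
  rintro _ ⟨w, -, rfl⟩
  linarith [hφ.sub_le_gauge x w]

lemma StrictLipschitzWrt.rho_le (hφ : StrictLipschitzWrt K φ) {y : Euc n}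
    (hy : y ∈ frontier U) (x : Euc n) : rho K U φ x ≤ gauge K (x - y) + φ y :=
  csInf_le (hφ.bddBelow_rho_image x) ⟨y, hy, rfl⟩

lemma StrictLipschitzWrt.rho_add_smul_sub_le (hφ : StrictLipschitzWrt K φ) {x y : Euc n}
    (hy : y ∈ frontier U) (hry : rho K U φ x = gauge K (x - y) + φ y) {t : ℝ} (ht : t ≤ 1) :
    rho K U φ (x + t • (y - x)) ≤ rho K U φ x - t * gauge K (x - y) := by
  have h := hφ.rho_le hy (x + t • (y - x))
  rw [show x + t • (y - x) - y = (1 - t) • (x - y) by module,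
    gauge_smul_of_nonneg (by linarith), smul_eq_mul] at h
  linarith [show (1 - t) * gauge K (x - y) = gauge K (x - y) - t * gauge K (x - y) by ring]

lemma HasFDerivAt.gauge_le_rho_apply (hφ : StrictLipschitzWrt K φ) {x y : Euc n}
    (hy : y ∈ frontier U) (hry : rho K U φ x = gauge K (x - y) + φ y) {L : Euc n →L[ℝ] ℝ}
    (hL : HasFDerivAt (rho K U φ) L x) : gauge K (x - y) ≤ L (x - y) := by
  have h : L (y - x) ≤ -gauge K (x - y) := by
    refine hL.apply_le_of_eventually_le_add ?_
    filter_upwards [Ioo_mem_nhdsGT (zero_lt_one' ℝ)] with t ht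
    linarith [hφ.rho_add_smul_sub_le hy hry ht.2.le]
  rw [← neg_sub, map_neg] at h
  linarith

lemma rho_le_rho_add_gauge (hKconv : Convex ℝ K) (hKabs : Absorbent ℝ K)
    (hφ : StrictLipschitzWrt K φ) {y : Euc n} (hy : y ∈ frontier U) (x x' : Euc n) :
    rho K U φ x' ≤ rho K U φ x + gauge K (x' - x) := by
  rw [← sub_le_iff_le_add]
  refine le_csInf ⟨_, y, hy, rfl⟩ ?_
  rintro _ ⟨w, hw, rfl⟩
  linarith [hφ.rho_le hw x', gauge_sub_le_gauge_sub_add_gauge_sub hKconv hKabs x' x w]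

lemma HasFDerivAt.rho_apply_le (hKconv : Convex ℝ K) (hKabs : Absorbent ℝ K)
    (hφ : StrictLipschitzWrt K φ) {x y : Euc n} (hy : y ∈ frontier U) {L : Euc n →L[ℝ] ℝ}
    (hL : HasFDerivAt (rho K U φ) L x) (v : Euc n) : L v ≤ gauge K v := by
  refine hL.apply_le_of_eventually_le_add (eventually_mem_nhdsWithin.mono fun t ht => ?_)
  have h := rho_le_rho_add_gauge hKconv hKabs hφ hy x (x + t • v)
  rwa [add_sub_cancel_left, gauge_smul_of_nonneg (le_of_lt ht), smul_eq_mul] at h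

lemma StrictLipschitzWrt.sub_ne_smul_sub (hφ : StrictLipschitzWrt K φ) {x y z : Euc n}
    (hyz : y ≠ z) (heq : gauge K (x - y) + φ y = gauge K (x - z) + φ z) {c : ℝ} (hc : 0 ≤ c) :
    x - y ≠ c • (x - z) := by
  intro hxy
  have hgy : gauge K (x - y) = c * gauge K (x - z) := by
    rw [hxy, gauge_smul_of_nonneg hc, smul_eq_mul]
  have hsub : y - z = (1 - c) • (x - z) := by
    rw [sub_smul, one_smul, ← hxy]; abel
  rcases lt_trichotomy c 1 with hc1 | rfl | hc1
  · have hg : gauge K (y - z) = (1 - c) * gauge K (x - z) := by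
      rw [hsub, gauge_smul_of_nonneg (by linarith), smul_eq_mul]
    linarith [(hφ y z hyz).2]
  · exact hyz (sub_eq_zero.mp (by simpa using hsub))
  · have hg : gauge K (z - y) = (c - 1) * gauge K (x - z) := by
      rw [← neg_sub, hsub, ← neg_smul, neg_sub, gauge_smul_of_nonneg (by linarith), smul_eq_mul]
    linarith [(hφ y z hyz).1]

end Rho

theorem rho_not_differentiableAt_of_two_closest_general {n : ℕ}
    (K : Set (Euc n)) (hKconv : Convex ℝ K)
    (hK0 : (0 : Euc n) ∈ interior K) (hKstrict : StrictlyConvexGauge K)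
    (U : Set (Euc n))
    (φ : Euc n → ℝ) (hφlip : StrictLipschitzWrt K φ)
    (x : Euc n)
    (y z : Euc n) (hy : y ∈ frontier U) (hz : z ∈ frontier U) (hyz : y ≠ z)
    (hry : rho K U φ x = gauge K (x - y) + φ y)
    (hrz : rho K U φ x = gauge K (x - z) + φ z) :
    ¬ DifferentiableAt ℝ (rho K U φ) x := by
  intro hD
  have hKabs : Absorbent ℝ K := absorbent_nhds_zero (mem_interior_iff_mem_nhds.mp hK0)
  have hL := hD.hasFDerivAt
  have hsuper : gauge K (x - y) + gauge K (x - z) ≤ gauge K ((x - y) + (x - z)) := by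
    have := hL.rho_apply_le hKconv hKabs hφlip hy ((x - y) + (x - z))
    rw [map_add] at this
    linarith [hL.gauge_le_rho_apply hφlip hy hry,
      hL.gauge_le_rho_apply hφlip hz hrz]
  obtain ⟨c, hc, hyz' | hzy'⟩ := not_not.mp (mt (hKstrict (x - y) (x - z)) hsuper.not_gt)
  · exact hφlip.sub_ne_smul_sub hyz (hry.symm.trans hrz) hc hyz'
  · exact hφlip.sub_ne_smul_sub hyz.symm (hrz.symm.trans hry) hc hzy'

/-- if `x ∈ U` has two distinct `ρ`-closest points on `∂U`, then `ρ` is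
not differentiable at `x`. -/
theorem rho_not_differentiableAt_of_two_closest {n : ℕ}
    (K : Set (Euc n)) (hKcpt : IsCompact K) (hKconv : Convex ℝ K)
    (hK0 : (0 : Euc n) ∈ interior K) (hKstrict : StrictlyConvexGauge K)
    (U : Set (Euc n)) (hUopen : IsOpen U) (hUbdd : Bornology.IsBounded U)
    (hUfr : (frontier U).Nonempty)
    (φ : Euc n → ℝ) (hφcont : Continuous φ) (hφlip : StrictLipschitzWrt K φ)
    (x : Euc n) (hx : x ∈ U)
    (y z : Euc n) (hy : y ∈ frontier U) (hz : z ∈ frontier U) (hyz : y ≠ z)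
    (hry : rho K U φ x = gauge K (x - y) + φ y)
    (hrz : rho K U φ x = gauge K (x - z) + φ z) :
    ¬ DifferentiableAt ℝ (rho K U φ) x :=
  rho_not_differentiableAt_of_two_closest_general K hKconv hK0 hKstrict U φ hφlip x y z hy hz hyz
    hry hrz
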